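/- Let A₁, A₂, B₁, B₂ be reals with A₁ ≠ B₁ and A₂ ≠ B₂. Define the 4×4 matrices Λ₁ = diag(A₁/(A₁-B₁), A₁/(A₁-B₁), 1, 1), Λ₃ = diag(1, 1, A₂/(A₂-B₂), A₂/(A₂-B₂)), Λ₂ = I + (B₂/(B₁-A₁))·(e₃e₁ᵀ + e₄e₂ᵀ), Λ₄ = I + (B₁/(B₂-A₂))·(e₁e₃ᵀ + e₂e₄ᵀ), and vectors U₁ = (B₁/(B₁-A₁))e₁, U₂ = (B₂/(A₁-B₁))e₃, U₃ = (B₂/(B₂-A₂))e₄, U₄ = (B₁/(A₂-B₂))e₂. Then the vector x_e = (1, 0, 0, 1)ᵀ is a fixed point of the composed affine map x ↦ Λ₄(Λ₃(Λ₂(Λ₁x + U₁) + U₂) + U₃) + U₄. -/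

import Mathlib

/-! `(1, 0, 0, 1)` is already fixed by each of the four affine maps `x ↦ Λᵢ x + Uᵢ` on its own:
coordinatewise this comes down to `a / (a - b) + b / (b - a) = 1` and
`c / (a - b) + c / (b - a) = 0`. -/

theorem div_sub_add_div_sub_rev_eq_one {K : Type*} [Field K] {a b : K} (h : a ≠ b) :
    a / (a - b) + b / (b - a) = 1 := by
  rw [← neg_sub a b, div_neg, ← sub_eq_add_neg, div_sub_div_same, div_self (sub_ne_zero.mpr h)]

theorem div_sub_add_div_sub_rev_eq_zero {K : Type*} [Field K] (a b c : K) :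
    c / (a - b) + c / (b - a) = 0 := by
  rw [← neg_sub a b, div_neg, add_neg_cancel]

/-- (1,0,0,1) is a fixed point of the composed one-cycle IPA affine map for
the one-agent two-target system. -/
theorem stmt_9 (A₁ A₂ B₁ B₂ : ℝ) (h1 : A₁ ≠ B₁) (h2 : A₂ ≠ B₂) :
    let Λ₁ : Matrix (Fin 4) (Fin 4) ℝ :=
      !![A₁/(A₁-B₁), 0, 0, 0; 0, A₁/(A₁-B₁), 0, 0; 0, 0, 1, 0; 0, 0, 0, 1]
    let Λ₂ : Matrix (Fin 4) (Fin 4) ℝ :=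
      !![1, 0, 0, 0; 0, 1, 0, 0; B₂/(B₁-A₁), 0, 1, 0; 0, B₂/(B₁-A₁), 0, 1]
    let Λ₃ : Matrix (Fin 4) (Fin 4) ℝ :=
      !![1, 0, 0, 0; 0, 1, 0, 0; 0, 0, A₂/(A₂-B₂), 0; 0, 0, 0, A₂/(A₂-B₂)]
    let Λ₄ : Matrix (Fin 4) (Fin 4) ℝ :=
      !![1, 0, B₁/(B₂-A₂), 0; 0, 1, 0, B₁/(B₂-A₂); 0, 0, 1, 0; 0, 0, 0, 1]
    let U₁ : Fin 4 → ℝ := ![B₁/(B₁-A₁), 0, 0, 0]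
    let U₂ : Fin 4 → ℝ := ![0, 0, B₂/(A₁-B₁), 0]
    let U₃ : Fin 4 → ℝ := ![0, 0, 0, B₂/(B₂-A₂)]
    let U₄ : Fin 4 → ℝ := ![0, B₁/(A₂-B₂), 0, 0]
    let xe : Fin 4 → ℝ := ![1, 0, 0, 1]
    Λ₄.mulVec (Λ₃.mulVec (Λ₂.mulVec (Λ₁.mulVec xe + U₁) + U₂) + U₃) + U₄ = xe := by
  intro Λ₁ Λ₂ Λ₃ Λ₄ U₁ U₂ U₃ U₄ xe
  have fixed₁ : Λ₁.mulVec xe + U₁ = xe := by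
    ext i
    fin_cases i <;> simp [Λ₁, U₁, xe, div_sub_add_div_sub_rev_eq_one h1]
  have fixed₂ : Λ₂.mulVec xe + U₂ = xe := by
    ext i
    fin_cases i <;> simp [Λ₂, U₂, xe, div_sub_add_div_sub_rev_eq_zero]
  have fixed₃ : Λ₃.mulVec xe + U₃ = xe := by
    ext i
    fin_cases i <;> simp [Λ₃, U₃, xe, div_sub_add_div_sub_rev_eq_one h2]
  have fixed₄ : Λ₄.mulVec xe + U₄ = xe := by
    ext i
    fin_cases i <;> simp [Λ₄, U₄, xe, div_sub_add_div_sub_rev_eq_zero]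
  rw [fixed₁, fixed₂, fixed₃, fixed₄]
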